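/- arXiv:1302.2186 — 4 statements merged into one kernel-verified Lean document; each statement's English description precedes it below -/
import Mathlib

section
/- Let H : ℝ → ℝ be continuous and strictly positive on (-1, ∞), and suppose x ↦ 1/H(x) is integrable on (z, ∞) for every z > -1; define H_p(z) = (1+z)⁻¹ ∫_z^∞ dx/H(x). Let z : ℝ → ℝ be a function (the redshift as a function of cosmic time) with z(t) > -1 for all t, satisfying the differential equation z'(t) = -(1 + z(t))·H(z(t)). Then for every t, the function t ↦ H_p(z(t)) is differentiable at t with derivative d/dt [H_p(z(t))] = H_p(z(t))·H(z(t)) + 1. -/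
/-!
Since `∫_u^∞ f = ∫_b^∞ f - ∫_b^u f` for `u > b`, the fundamental theorem of calculus gives
`d/du ∫_u^∞ dx/H(x) = -1/H(u)`. Differentiating `H_p = (1+u)⁻¹ ∫_u^∞ dx/H(x)` by the product rule
and composing with `dz/dt = -(1+z)H(z)`, the first term becomes `H_p H` and the second `+1`.
-/

open MeasureTheory Filter Set Topology

theorem hasDerivAt_integral_Ioi {E : Type*} [NormedAddCommGroup E] [NormedSpace ℝ E]
    [CompleteSpace E] {f : ℝ → E} {a b : ℝ} (hf : IntegrableOn f (Ioi b))
    (hba : b < a) (hfa : ContinuousAt f a) :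
    HasDerivAt (fun u => ∫ x in Ioi u, f x) (-f a) a := by
  have htail : (fun u => ∫ x in Ioi u, f x) =ᶠ[𝓝 a]
      fun u => (∫ x in Ioi b, f x) - ∫ x in b..u, f x := by
    filter_upwards [Ioi_mem_nhds hba] with u hu
    rw [← intervalIntegral.integral_Ioi_sub_Ioi hf hu.le, sub_sub_cancel]
  have hFTC : HasDerivAt (fun u => ∫ x in b..u, f x) (f a) a :=
    intervalIntegral.integral_hasDerivAt_right
      ((intervalIntegrable_iff_integrableOn_Ioc_of_le hba.le).2
        (hf.mono_set Ioc_subset_Ioi_self))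
      (AEStronglyMeasurable.stronglyMeasurableAtFilter_of_mem hf.aestronglyMeasurable
        (Ioi_mem_nhds hba))
      hfa
  simpa using ((hasDerivAt_const a _).sub hFTC).congr_of_eventuallyEq htail

/-- Velocity of the particle horizon with respect to cosmic time:
if the redshift evolves by `dz/dt = -(1+z)H(z)`, then
`d/dt [H_p(z(t))] = H_p(z(t))·H(z(t)) + 1`. -/
theorem particleHorizon_velocity
    (H : ℝ → ℝ)
    (hHcont : ContinuousOn H (Set.Ioi (-1)))
    (hHpos : ∀ x ∈ Set.Ioi (-1 : ℝ), 0 < H x)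
    (hint : ∀ z : ℝ, -1 < z → IntegrableOn (fun x => 1 / H x) (Set.Ioi z))
    (Hp : ℝ → ℝ)
    (hHp : ∀ z : ℝ, Hp z = (1 + z)⁻¹ * ∫ x in Set.Ioi z, 1 / H x)
    (z : ℝ → ℝ) (hz : ∀ t : ℝ, -1 < z t)
    (hz' : ∀ t : ℝ, HasDerivAt z (-(1 + z t) * H (z t)) t) :
    ∀ t : ℝ, HasDerivAt (fun t => Hp (z t)) (Hp (z t) * H (z t) + 1) t := by
  intro t
  have hzt : -1 < z t := hz t
  have hH_ne : H (z t) ≠ 0 := (hHpos _ hzt).ne'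
  have h1z_ne : 1 + z t ≠ 0 := by linarith
  obtain ⟨b, hb, hbz⟩ := exists_between hzt
  have hcont : ContinuousAt (fun x => 1 / H x) (z t) :=
    continuousAt_const.div ((hHcont _ hzt).continuousAt (Ioi_mem_nhds hzt)) hH_ne
  have hHp_deriv := (((hasDerivAt_id' (z t)).const_add 1).fun_inv h1z_ne).fun_mul
    (hasDerivAt_integral_Ioi (hint b hb) hbz hcont)
  rw [← funext hHp] at hHp_deriv
  refine (hHp_deriv.comp t (hz' t)).congr_deriv ?_
  rw [hHp]
  field_simp
  ring
end

section
/- Let N < 2 and let H : ℝ → ℝ be differentiable and strictly positive on (-1, ∞), suppose x ↦ 1/H(x) is integrable on (-1, b] for every b > -1 but not integrable on (-1, ∞), suppose H(z)/(1+z) tends to 0 as z → ∞, and suppose that (1+z)·H'(z)/H(z) tends to N/2 as z → ∞. Define H_e(z) = (1+z)⁻¹ ∫_{-1}^z dx/H(x). Then the recession velocity of the event horizon H_e(z)·H(z) tends to 2/(2-N) as z → ∞; equivalently, the event horizon velocity dH_e/dt = H_e(z)H(z) - 1 tends to N/(2-N) at the origin of the universe. -/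
/-!
Write `H_e(z) H(z) = F(z) / G(z)` with `F(z) = ∫_{-1}^z dx/H(x)` and `G(z) = (1+z)/H(z)`.
Since `H(z)/(1+z) → 0`, `G → ∞`, so L'Hôpital's rule in its `·/∞` form applies:
`F'/G' = 1/(1 - (1+z)H'/H) → 1/(1 - N/2) = 2/(2-N)`.
-/

open MeasureTheory Filter Set Topology

theorem exists_sub_eq_mul_ratio_deriv {f f' g g' : ℝ → ℝ} {a b : ℝ} (hab : a < b)
    (hff' : ∀ x ∈ Icc a b, HasDerivAt f (f' x) x) (hgg' : ∀ x ∈ Icc a b, HasDerivAt g (g' x) x)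
    (hg' : ∀ x ∈ Ioo a b, g' x ≠ 0) :
    ∃ c ∈ Ioo a b, f b - f a = (g b - g a) * (f' c / g' c) := by
  obtain ⟨c, hc, hcauchy⟩ := exists_ratio_hasDerivAt_eq_ratio_slope f f' hab
    (fun x hx => (hff' x hx).continuousAt.continuousWithinAt)
    (fun x hx => hff' x (Ioo_subset_Icc_self hx))
    g g' (fun x hx => (hgg' x hx).continuousAt.continuousWithinAt)
    (fun x hx => hgg' x (Ioo_subset_Icc_self hx))
  refine ⟨c, hc, ?_⟩
  rw [mul_div_assoc', eq_div_iff (hg' c hc), hcauchy]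

theorem HasDerivAt.lhopital_atTop_of_tendsto_atTop {f f' g g' : ℝ → ℝ} {L : ℝ}
    (hff' : ∀ᶠ x in atTop, HasDerivAt f (f' x) x) (hgg' : ∀ᶠ x in atTop, HasDerivAt g (g' x) x)
    (hg' : ∀ᶠ x in atTop, g' x ≠ 0) (hgtop : Tendsto g atTop atTop)
    (hdiv : Tendsto (fun x => f' x / g' x) atTop (𝓝 L)) :
    Tendsto (fun x => f x / g x) atTop (𝓝 L) := by
  rw [Metric.tendsto_nhds]
  intro ε hε
  obtain ⟨b, hb⟩ := (hff'.and <| hgg'.and <| hg'.and <|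
    Metric.tendsto_nhds.1 hdiv (ε / 2) (half_pos hε)).exists_forall_of_atTop
  set C := |f b| + (|L| + ε / 2) * |g b|
  have hC : Tendsto (fun z => C / g z) atTop (𝓝 0) := tendsto_const_nhds.div_atTop hgtop
  filter_upwards [eventually_gt_atTop b, hgtop.eventually_gt_atTop 0,
    Metric.tendsto_nhds.1 hC (ε / 2) (half_pos hε)] with z hbz hgz hCz
  obtain ⟨c, hc, hfz⟩ := exists_sub_eq_mul_ratio_deriv hbz (fun x hx => (hb x hx.1).1)
    (fun x hx => (hb x hx.1).2.1) (fun x hx => (hb x hx.1.le).2.2.1)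
  set r := f' c / g' c
  have hrL : |r - L| < ε / 2 := by simpa [Real.dist_eq] using (hb c hc.1.le).2.2.2
  have hfb : |f b - r * g b| ≤ C := by
    have hr : |r| ≤ |L| + ε / 2 := by linarith [abs_sub_abs_le_abs_sub r L]
    calc |f b - r * g b| ≤ |f b| + |r| * |g b| := by rw [← abs_mul]; exact abs_sub _ _
      _ ≤ |f b| + (|L| + ε / 2) * |g b| := by gcongr
  have hsmall : |(f b - r * g b) / g z| < ε / 2 := by
    rw [Real.dist_eq, sub_zero, abs_of_nonneg (by positivity)] at hCz
    rw [abs_div, abs_of_pos hgz]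
    exact (div_le_div_of_nonneg_right hfb hgz.le).trans_lt hCz
  calc dist (f z / g z) L = |(f b - r * g b) / g z + (r - L)| := by
        rw [Real.dist_eq, show f z = f b + (g z - g b) * r by linarith]
        congr 1
        field_simp
        ring
    _ ≤ |(f b - r * g b) / g z| + |r - L| := abs_add_le _ _
    _ < ε / 2 + ε / 2 := add_lt_add hsmall hrL
    _ = ε := add_halves ε

theorem hasDerivAt_intervalIntegral_of_continuousOn_Ioi {f : ℝ → ℝ} {a z : ℝ}
    (hf : ContinuousOn f (Ioi a)) (hint : IntegrableOn f (Ioc a z)) (hz : a < z) :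
    HasDerivAt (fun x => ∫ t in a..x, f t) (f z) z :=
  intervalIntegral.integral_hasDerivAt_right
    ((intervalIntegrable_iff_integrableOn_Ioc_of_le hz.le).2 hint)
    (hf.stronglyMeasurableAtFilter isOpen_Ioi z hz) (hf.continuousAt (Ioi_mem_nhds hz))

theorem HasDerivAt.one_add_div {H : ℝ → ℝ} {h z : ℝ} (hH : HasDerivAt H h z) (hz : H z ≠ 0) :
    HasDerivAt (fun x => (1 + x) / H x) ((1 - (1 + z) * h / H z) / H z) z :=
  (((hasDerivAt_id' z).const_add 1).fun_div hH hz).congr_deriv (by field_simp)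

theorem tendsto_one_add_div_atTop {H : ℝ → ℝ} (hpos : ∀ᶠ z in atTop, 0 < H z)
    (h : Tendsto (fun z => H z / (1 + z)) atTop (𝓝 0)) :
    Tendsto (fun z => (1 + z) / H z) atTop atTop := by
  have h' : ∀ᶠ z in atTop, H z / (1 + z) ∈ Ioi 0 := by
    filter_upwards [eventually_gt_atTop (-1), hpos] with z hz hHz
    exact div_pos hHz (by linarith)
  simpa only [Pi.inv_def, inv_div] using
    (tendsto_nhdsWithin_iff.2 ⟨h, h'⟩).inv_tendsto_nhdsGT_zero

theorem tendsto_inv_div_deriv_one_add_div {H H' : ℝ → ℝ} {N : ℝ} (hN : N < 2)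
    (hH0 : ∀ᶠ z in atTop, H z ≠ 0)
    (hlog : Tendsto (fun z => (1 + z) * H' z / H z) atTop (𝓝 (N / 2))) :
    Tendsto (fun z => 1 / H z / ((1 - (1 + z) * H' z / H z) / H z)) atTop (𝓝 (2 / (2 - N))) := by
  have hq0 : 1 - N / 2 ≠ 0 := by linarith
  convert ((tendsto_const_nhds.sub hlog).inv₀ hq0).congr' ?_ using 2
  · field_simp
  · filter_upwards [hH0] with z hHz
    field_simp

theorem eventHorizon_velocity_at_origin_general
    (N : ℝ) (hN : N < 2)
    (H H' : ℝ → ℝ)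
    (hHderiv : ∀ z ∈ Set.Ioi (-1 : ℝ), HasDerivAt H (H' z) z)
    (hHpos : ∀ x ∈ Set.Ioi (-1 : ℝ), 0 < H x)
    (hint : ∀ b : ℝ, -1 < b → IntegrableOn (fun x => 1 / H x) (Set.Ioc (-1) b))
    (hHratio : Tendsto (fun z => H z / (1 + z)) atTop (nhds 0))
    (hlog : Tendsto (fun z => (1 + z) * H' z / H z) atTop (nhds (N / 2)))
    (He : ℝ → ℝ)
    (hHe : ∀ z : ℝ, He z = (1 + z)⁻¹ * ∫ x in Set.Ioc (-1) z, 1 / H x) :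
    Tendsto (fun z => He z * H z) atTop (nhds (2 / (2 - N))) ∧
    Tendsto (fun z => He z * H z - 1) atTop (nhds (N / (2 - N))) := by
  have hHpos' : ∀ᶠ z in atTop, 0 < H z := (eventually_gt_atTop (-1)).mono hHpos
  have hH0 : ∀ᶠ z in atTop, H z ≠ 0 := hHpos'.mono fun _ h => h.ne'
  have hcont : ContinuousOn (fun x => 1 / H x) (Ioi (-1)) := fun x hx =>
    (continuousAt_const.div (hHderiv x hx).continuousAt (hHpos x hx).ne').continuousWithinAt
  have hHeH : Tendsto (fun z => He z * H z) atTop (𝓝 (2 / (2 - N))) := by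
    refine (HasDerivAt.lhopital_atTop_of_tendsto_atTop (f := fun z => ∫ x in (-1)..z, 1 / H x)
      ?_ ?_ ?_ (tendsto_one_add_div_atTop hHpos' hHratio)
      (tendsto_inv_div_deriv_one_add_div hN hH0 hlog)).congr' ?_
    · filter_upwards [eventually_gt_atTop (-1)] with z hz
      exact hasDerivAt_intervalIntegral_of_continuousOn_Ioi hcont (hint z hz) hz
    · filter_upwards [eventually_gt_atTop (-1), hH0] with z hz hHz
      exact (hHderiv z hz).one_add_div hHz
    · filter_upwards [hlog.eventually_lt_const (by linarith : N / 2 < 1), hH0] with z hqz hHz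
      exact div_ne_zero (sub_ne_zero.2 hqz.ne') hHz
    · filter_upwards [eventually_gt_atTop (-1)] with z hz
      rw [hHe, intervalIntegral.integral_of_le hz.le]
      field_simp
  refine ⟨hHeH, ?_⟩
  convert hHeH.sub_const 1 using 2
  rw [div_sub_one (by linarith)]
  ring

/-- Recession velocity of the event horizon at the origin of the universe, case `N < 2`:
if `∫_{-1}^∞ dx/H(x)` diverges, `H(z)/(1+z) → 0` and `(1+z)H'(z)/H(z) → N/2` as `z → ∞`,
then `H_e(z)·H(z) → 2/(2-N)` as `z → ∞`; equivalently, the event horizon velocity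
`dH_e/dt = H_e·H - 1 → N/(2-N)`. -/
theorem eventHorizon_velocity_at_origin
    (N : ℝ) (hN : N < 2)
    (H H' : ℝ → ℝ)
    (hHderiv : ∀ z ∈ Set.Ioi (-1 : ℝ), HasDerivAt H (H' z) z)
    (hHpos : ∀ x ∈ Set.Ioi (-1 : ℝ), 0 < H x)
    (hint : ∀ b : ℝ, -1 < b → IntegrableOn (fun x => 1 / H x) (Set.Ioc (-1) b))
    (hdiv : ¬ IntegrableOn (fun x => 1 / H x) (Set.Ioi (-1)))
    (hHratio : Tendsto (fun z => H z / (1 + z)) atTop (nhds 0))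
    (hlog : Tendsto (fun z => (1 + z) * H' z / H z) atTop (nhds (N / 2)))
    (He : ℝ → ℝ)
    (hHe : ∀ z : ℝ, He z = (1 + z)⁻¹ * ∫ x in Set.Ioc (-1) z, 1 / H x) :
    Tendsto (fun z => He z * H z) atTop (nhds (2 / (2 - N))) ∧
    Tendsto (fun z => He z * H z - 1) atTop (nhds (N / (2 - N))) :=
  eventHorizon_velocity_at_origin_general N hN H H' hHderiv hHpos hint hHratio hlog He hHe
end

section
/- Let H : ℝ → ℝ be continuous and strictly positive on (-1, ∞), suppose x ↦ 1/H(x) is integrable on (-1, b] for every b > -1, and suppose H(z) → ∞ as z → -1⁺. Define H_e(z) = (1+z)⁻¹ ∫_{-1}^z dx/H(x). Then H_e(z) tends to 0 as z → -1⁺. (This is the case m < 0 of the value of the event horizon at the far future.) -/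
/-! `H_e(z)` is the mean of `1/H` over `(-1, z]`, and `1/H → 0` at `-1⁺` because `H → ∞`;
a mean over a shrinking interval is bounded by the supremum of the integrand there. -/

open MeasureTheory Filter Set Topology

variable {E : Type*} [NormedAddCommGroup E] [NormedSpace ℝ E]

theorem norm_average_Ioc_le {f : ℝ → E} {a z C : ℝ} (haz : a < z)
    (hf : ∀ x ∈ Ioc a z, ‖f x‖ ≤ C) : ‖(z - a)⁻¹ • ∫ x in Ioc a z, f x‖ ≤ C := by
  have hlen : 0 < z - a := sub_pos.2 haz
  have hbound : ‖∫ x in Ioc a z, f x‖ ≤ C * (z - a) := by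
    simpa [Measure.real, Real.volume_Ioc, hlen.le] using
      norm_setIntegral_le_of_norm_le_const (μ := volume) measure_Ioc_lt_top hf
  calc ‖(z - a)⁻¹ • ∫ x in Ioc a z, f x‖
      = (z - a)⁻¹ * ‖∫ x in Ioc a z, f x‖ := by
        rw [norm_smul, norm_inv, Real.norm_of_nonneg hlen.le]
    _ ≤ (z - a)⁻¹ * (C * (z - a)) := by gcongr
    _ = C := by field_simp

theorem tendsto_average_Ioc_nhdsGT_zero {f : ℝ → E} {a : ℝ} (hf : Tendsto f (𝓝[>] a) (𝓝 0)) :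
    Tendsto (fun z => (z - a)⁻¹ • ∫ x in Ioc a z, f x) (𝓝[>] a) (𝓝 0) := by
  rw [(nhdsGT_basis a).tendsto_iff Metric.nhds_basis_closedBall] at hf ⊢
  intro ε hε
  obtain ⟨b, hab, hb⟩ := hf ε hε
  refine ⟨b, hab, fun z hz => mem_closedBall_zero_iff.2 (norm_average_Ioc_le hz.1 fun x hx => ?_)⟩
  exact mem_closedBall_zero_iff.1 (hb x ⟨hx.1, hx.2.trans_lt hz.2⟩)

theorem eventHorizon_tendsto_zero_far_future_general
    (H : ℝ → ℝ)
    (hHtop : Tendsto H (nhdsWithin (-1) (Set.Ioi (-1))) atTop) :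
    Tendsto (fun z => (1 + z)⁻¹ * ∫ x in Set.Ioc (-1) z, 1 / H x)
      (nhdsWithin (-1) (Set.Ioi (-1))) (nhds 0) := by
  have hinv : Tendsto (fun x => 1 / H x) (𝓝[>] (-1)) (𝓝 0) :=
    hHtop.inv_tendsto_atTop.congr fun x => (one_div (H x)).symm
  refine (tendsto_average_Ioc_nhdsGT_zero hinv).congr fun z => ?_
  rw [smul_eq_mul, sub_neg_eq_add, add_comm]

/-- Event horizon at the far future, case `m < 0` (`H(z) → ∞` as `z → -1⁺`):
`H_e(z) = (1+z)⁻¹ ∫_{-1}^z dx/H(x) → 0` as `z → -1⁺`. -/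
theorem eventHorizon_tendsto_zero_far_future
    (H : ℝ → ℝ)
    (hHcont : ContinuousOn H (Set.Ioi (-1)))
    (hHpos : ∀ x ∈ Set.Ioi (-1 : ℝ), 0 < H x)
    (hint : ∀ b : ℝ, -1 < b → IntegrableOn (fun x => 1 / H x) (Set.Ioc (-1) b))
    (hHtop : Tendsto H (nhdsWithin (-1) (Set.Ioi (-1))) atTop) :
    Tendsto (fun z => (1 + z)⁻¹ * ∫ x in Set.Ioc (-1) z, 1 / H x)
      (nhdsWithin (-1) (Set.Ioi (-1))) (nhds 0) :=
  eventHorizon_tendsto_zero_far_future_general H hHtop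
end

section
/- Let m < 2 and let H : ℝ → ℝ be differentiable and strictly positive on (-1, ∞), suppose x ↦ 1/H(x) is integrable on (-1, b] for every b > -1, suppose H(z)/(1+z) tends to +∞ as z → -1⁺, and suppose that (1+z)·H'(z)/H(z) tends to m/2 as z → -1⁺. Define H_e(z) = (1+z)⁻¹ ∫_{-1}^z dx/H(x). Then the recession velocity of the event horizon H_e(z)·H(z) tends to 2/(2-m) as z → -1⁺; equivalently, the event horizon velocity dH_e/dt = H_e(z)H(z) - 1 tends to m/(2-m) at the far future. -/
/-!
`H_e(z) H(z)` is the quotient of `∫_{-1}^z dx/H(x)` by `(1+z)/H(z)`, a `0/0` form at `z = -1⁺`: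
the numerator vanishes by integrability of `1/H` and the denominator because `H(z)/(1+z) → ∞`.
The derivatives are `1/H` and `(1 - (1+z)H'/H)/H`, whose quotient `(1 - (1+z)H'/H)⁻¹` tends to
`(1 - m/2)⁻¹ = 2/(2-m)`, so L'Hôpital's rule gives the limit; `m < 2` keeps the denominator's
derivative away from zero near `-1`.
-/

open MeasureTheory Filter Set Topology

section Primitive

variable {E : Type*} [NormedAddCommGroup E] [NormedSpace ℝ E]
  {f : ℝ → E} {a b : ℝ}

theorem hasDerivAt_intervalIntegral_of_integrableOn_Ioc [CompleteSpace E]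
    (hf : IntegrableOn f (Ioc a b)) {z : ℝ} (hz : z ∈ Ioo a b) (hfz : ContinuousAt f z) :
    HasDerivAt (fun y => ∫ x in a..y, f x) (f z) z :=
  intervalIntegral.integral_hasDerivAt_right
    ((intervalIntegrable_iff_integrableOn_Ioc_of_le hz.1.le).2
      (hf.mono_set (Ioc_subset_Ioc_right hz.2.le)))
    (AEStronglyMeasurable.stronglyMeasurableAtFilter_of_mem
      (hf.mono_set Ioo_subset_Ioc_self).aestronglyMeasurable (Ioo_mem_nhds hz.1 hz.2))
    hfz

theorem tendsto_intervalIntegral_nhdsGT (hab : a < b) (hf : IntegrableOn f (Ioc a b)) :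
    Tendsto (fun z => ∫ x in a..z, f x) (𝓝[>] a) (𝓝 0) := by
  have hcont : ContinuousWithinAt (fun z => ∫ x in a..z, f x) (Icc a b) a :=
    intervalIntegral.continuousWithinAt_primitive (measure_singleton a) (by
      rwa [min_self, max_eq_right hab.le, intervalIntegrable_iff_integrableOn_Ioc_of_le hab.le])
  simpa using hcont.tendsto.mono_left (nhdsWithin_le_of_mem (Icc_mem_nhdsGT hab))

end Primitive

theorem HasDerivAt.sub_const_div {H : ℝ → ℝ} {h a z : ℝ} (hH : HasDerivAt H h z) (hz : H z ≠ 0) :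
    HasDerivAt (fun y => (y - a) / H y) ((1 - (z - a) * h / H z) / H z) z :=
  (((hasDerivAt_id' z).sub_const a).div hH hz).congr_deriv (by field_simp)

theorem tendsto_intervalIntegral_one_div_div_nhdsGT {H H' : ℝ → ℝ} {a b c : ℝ}
    (hab : a < b) (hc : c < 1)
    (hH : ∀ᶠ z in 𝓝[>] a, HasDerivAt H (H' z) z)
    (hint : IntegrableOn (fun x => 1 / H x) (Ioc a b))
    (hratio : Tendsto (fun z => H z / (z - a)) (𝓝[>] a) atTop)
    (hlog : Tendsto (fun z => (z - a) * H' z / H z) (𝓝[>] a) (𝓝 c)) :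
    Tendsto (fun z => (∫ x in a..z, 1 / H x) / ((z - a) / H z)) (𝓝[>] a) (𝓝 (1 - c)⁻¹) := by
  have hpos : ∀ᶠ z in 𝓝[>] a, 0 < H z := by
    filter_upwards [hratio.eventually_gt_atTop 0, self_mem_nhdsWithin] with z hz (haz : a < z)
    exact (div_pos_iff_of_pos_right (sub_pos.2 haz)).1 hz
  have hlt : ∀ᶠ z in 𝓝[>] a, (z - a) * H' z / H z < 1 := hlog.eventually (eventually_lt_nhds hc)
  refine HasDerivAt.lhopital_zero_nhdsGT (f' := fun z => 1 / H z)
    (g' := fun z => (1 - (z - a) * H' z / H z) / H z) ?_ ?_ ?_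
    (tendsto_intervalIntegral_nhdsGT hab hint) ?_ ?_
  · filter_upwards [hH, hpos, Ioo_mem_nhdsGT hab] with z hHz hz hzab
    exact hasDerivAt_intervalIntegral_of_integrableOn_Ioc hint hzab
      (continuousAt_const.div hHz.continuousAt hz.ne')
  · filter_upwards [hH, hpos] with z hHz hz
    exact hHz.sub_const_div hz.ne'
  · filter_upwards [hpos, hlt] with z hz hzc
    exact div_ne_zero (sub_ne_zero.2 hzc.ne') hz.ne'
  · exact hratio.inv_tendsto_atTop.congr fun z => inv_div _ _
  · refine ((tendsto_const_nhds.sub hlog).inv₀ (sub_ne_zero.2 hc.ne')).congr' ?_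
    filter_upwards [hpos] with z hz
    field_simp

theorem eventHorizon_velocity_far_future_general
    (m : ℝ) (hm : m < 2)
    (H H' : ℝ → ℝ)
    (hHderiv : ∀ z ∈ Set.Ioi (-1 : ℝ), HasDerivAt H (H' z) z)
    (hint : ∀ b : ℝ, -1 < b → IntegrableOn (fun x => 1 / H x) (Set.Ioc (-1) b))
    (hHratio : Tendsto (fun z => H z / (1 + z)) (nhdsWithin (-1) (Set.Ioi (-1))) atTop)
    (hlog : Tendsto (fun z => (1 + z) * H' z / H z)
      (nhdsWithin (-1) (Set.Ioi (-1))) (nhds (m / 2)))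
    (He : ℝ → ℝ)
    (hHe : ∀ z : ℝ, He z = (1 + z)⁻¹ * ∫ x in Set.Ioc (-1) z, 1 / H x) :
    Tendsto (fun z => He z * H z) (nhdsWithin (-1) (Set.Ioi (-1))) (nhds (2 / (2 - m))) ∧
    Tendsto (fun z => He z * H z - 1) (nhdsWithin (-1) (Set.Ioi (-1))) (nhds (m / (2 - m))) := by
  have hlim := tendsto_intervalIntegral_one_div_div_nhdsGT (b := 0) (c := m / 2)
    (by norm_num) (by linarith) (eventually_nhdsWithin_of_forall hHderiv) (hint 0 (by norm_num))
    (by simpa only [sub_neg_eq_add, add_comm] using hHratio)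
    (by simpa only [sub_neg_eq_add, add_comm] using hlog)
  have hrecession : Tendsto (fun z => He z * H z) (𝓝[>] (-1)) (𝓝 (2 / (2 - m))) := by
    rw [show 2 / (2 - m) = (1 - m / 2)⁻¹ by field_simp]
    refine hlim.congr' ?_
    filter_upwards [self_mem_nhdsWithin] with z (hz : -1 < z)
    rw [hHe, intervalIntegral.integral_of_le hz.le, div_div_eq_mul_div, sub_neg_eq_add, add_comm z]
    ring
  refine ⟨hrecession, ?_⟩
  convert hrecession.sub_const 1 using 2
  field_simp [sub_ne_zero.2 hm.ne']
  ring

/-- Recession velocity of the event horizon at the far future: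
if `m < 2`, `H(z)/(1+z) → ∞` and `(1+z)H'(z)/H(z) → m/2` as `z → -1⁺`, then
`H_e(z)·H(z) → 2/(2-m)` as `z → -1⁺`; equivalently, the event horizon velocity
`dH_e/dt = H_e·H - 1 → m/(2-m)` at the far future. -/
theorem eventHorizon_velocity_far_future
    (m : ℝ) (hm : m < 2)
    (H H' : ℝ → ℝ)
    (hHderiv : ∀ z ∈ Set.Ioi (-1 : ℝ), HasDerivAt H (H' z) z)
    (hHpos : ∀ x ∈ Set.Ioi (-1 : ℝ), 0 < H x)
    (hint : ∀ b : ℝ, -1 < b → IntegrableOn (fun x => 1 / H x) (Set.Ioc (-1) b))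
    (hHratio : Tendsto (fun z => H z / (1 + z)) (nhdsWithin (-1) (Set.Ioi (-1))) atTop)
    (hlog : Tendsto (fun z => (1 + z) * H' z / H z)
      (nhdsWithin (-1) (Set.Ioi (-1))) (nhds (m / 2)))
    (He : ℝ → ℝ)
    (hHe : ∀ z : ℝ, He z = (1 + z)⁻¹ * ∫ x in Set.Ioc (-1) z, 1 / H x) :
    Tendsto (fun z => He z * H z) (nhdsWithin (-1) (Set.Ioi (-1))) (nhds (2 / (2 - m))) ∧
    Tendsto (fun z => He z * H z - 1) (nhdsWithin (-1) (Set.Ioi (-1))) (nhds (m / (2 - m))) :=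
  eventHorizon_velocity_far_future_general m hm H H' hHderiv hint hHratio hlog He hHe
end
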